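/- arXiv:2007.00071 — 2 statements merged into one kernel-verified Lean document; each statement's English description precedes it below -/
import Mathlib

section
/- Let u : ℝ → ℝ be a differentiable function satisfying the differential inequality u'(s) ≤ −c − u(s)²/(n−1) for all s ∈ ℝ, where c ≥ 0 and n ≥ 2. Then u ≡ 0 and c = 0. In particular, there is no globally defined solution when c > 0. -/
/-!
Since `c ≥ 0`, `u' ≤ -u²/a` with `a = n - 1 > 0`, so `u` is antitone, and wherever `u ≠ 0` the
function `1/u` grows at rate at least `1/a`. If `u(s₀) < 0`, then `u < 0` on `[s₀, ∞)` while `1/u`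
climbs from `1/u(s₀)` to `0` by time `s₀ - a/u(s₀)`: `u` blows up in finite forward time.
Applying this to `s ↦ -u(-s)` rules out `u(s₀) > 0`, so `u ≡ 0`, and then `0 = u' ≤ -c` forces
`c = 0`.
-/

variable {a : ℝ} {u : ℝ → ℝ}

lemma antitone_of_deriv_le_neg_sq_div (ha : 0 ≤ a) (hu : Differentiable ℝ u)
    (h : ∀ s, deriv u s ≤ -(u s ^ 2 / a)) : Antitone u :=
  antitone_of_deriv_nonpos hu fun s => (h s).trans (neg_nonpos.2 (by positivity))

lemma mul_sub_le_inv_sub_inv_of_deriv_le_neg_sq_div (hu : Differentiable ℝ u)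
    (h : ∀ s, deriv u s ≤ -(u s ^ 2 / a)) {s₀ : ℝ} (hne : ∀ s ∈ Set.Ici s₀, u s ≠ 0)
    {s : ℝ} (hs : s₀ ≤ s) : a⁻¹ * (s - s₀) ≤ (u s)⁻¹ - (u s₀)⁻¹ := by
  have hderiv : ∀ x ∈ Set.Ici s₀, HasDerivAt (fun s => (u s)⁻¹) (-deriv u x / u x ^ 2) x :=
    fun x hx => (hu x).hasDerivAt.inv (hne x hx)
  have hrate : ∀ x ∈ Set.Ici s₀, a⁻¹ ≤ -deriv u x / u x ^ 2 := by
    intro x hx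
    have hsq : 0 < u x ^ 2 := by positivity [hne x hx]
    rw [le_div_iff₀ hsq, ← div_eq_inv_mul]
    linarith [h x]
  refine (convex_Ici s₀).mul_sub_le_image_sub_of_le_deriv
    (fun x hx => (hderiv x hx).continuousAt.continuousWithinAt)
    (fun x hx => (hderiv x (interior_subset hx)).differentiableAt.differentiableWithinAt)
    (fun x hx => ?_) s₀ Set.self_mem_Ici s hs hs
  rw [(hderiv x (interior_subset hx)).deriv]
  exact hrate x (interior_subset hx)

lemma nonneg_of_deriv_le_neg_sq_div (ha : 0 < a) (hu : Differentiable ℝ u)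
    (h : ∀ s, deriv u s ≤ -(u s ^ 2 / a)) (s₀ : ℝ) : 0 ≤ u s₀ := by
  by_contra! hs₀
  have hneg : ∀ s ∈ Set.Ici s₀, u s < 0 := fun s hs =>
    (antitone_of_deriv_le_neg_sq_div ha.le hu h hs).trans_lt hs₀
  set t := s₀ - a * (u s₀)⁻¹
  have hst : s₀ ≤ t := by
    have : (u s₀)⁻¹ < 0 := inv_lt_zero.2 hs₀
    simp only [t]; nlinarith
  have hcmp := mul_sub_le_inv_sub_inv_of_deriv_le_neg_sq_div hu h
    (fun s hs => (hneg s hs).ne) hst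
  have hat : a⁻¹ * (t - s₀) = -(u s₀)⁻¹ := by field_simp; ring
  have : (u t)⁻¹ < 0 := inv_lt_zero.2 (hneg t hst)
  linarith

lemma nonpos_of_deriv_le_neg_sq_div (ha : 0 < a) (hu : Differentiable ℝ u)
    (h : ∀ s, deriv u s ≤ -(u s ^ 2 / a)) (s₀ : ℝ) : u s₀ ≤ 0 := by
  have hderiv : ∀ s, HasDerivAt (fun s => -u (-s)) (deriv u (-s)) s := fun s =>
    ((hu (-s)).hasDerivAt.comp s (hasDerivAt_neg s)).neg.congr_deriv (by ring)
  have := nonneg_of_deriv_le_neg_sq_div ha (fun s => (hderiv s).differentiableAt)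
    (fun s => by simpa [(hderiv s).deriv] using h (-s)) (-s₀)
  simpa using this

lemma eq_zero_of_deriv_le_neg_sq_div (ha : 0 < a) (hu : Differentiable ℝ u)
    (h : ∀ s, deriv u s ≤ -(u s ^ 2 / a)) : u = 0 :=
  funext fun s => le_antisymm (nonpos_of_deriv_le_neg_sq_div ha hu h s)
    (nonneg_of_deriv_le_neg_sq_div ha hu h s)

/-- If `u : ℝ → ℝ` is differentiable and satisfies `u' ≤ −c − u²/(n−1)` everywhere with
`c ≥ 0` and `n ≥ 2`, then `u ≡ 0` and `c = 0`. -/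
theorem stmt5 (n : ℕ) (hn : 2 ≤ n) (c : ℝ) (hc : 0 ≤ c) (u : ℝ → ℝ)
    (hu : Differentiable ℝ u)
    (hineq : ∀ s : ℝ, deriv u s ≤ -c - u s ^ 2 / ((n : ℝ) - 1)) :
    (∀ s, u s = 0) ∧ c = 0 := by
  have ha : (0 : ℝ) < n - 1 := by
    have : (2 : ℝ) ≤ n := by exact_mod_cast hn
    linarith
  have hu0 : u = 0 := eq_zero_of_deriv_le_neg_sq_div ha hu fun s => by linarith [hineq s]
  subst hu0
  refine ⟨fun _ => rfl, le_antisymm ?_ hc⟩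
  simpa using hineq 0
end

section
/- Let (M,g) be a Riemannian manifold and T a unit vector field with geodesic flow and integrable normal bundle, and let g_L = g − 2T♭⊗T♭ with Levi-Civita connection ∇^L. If X, Y are local eigenvector fields of ∇T with ∇_X T = μX, ∇_Y T = νY, both orthogonal to T and g-orthonormal, then ∇^L_X Y = 2μ g(X,Y) T + ∇_X Y. -/
/-- An abstract calculus of smooth vector fields on a manifold `M`: a module of vector
fields over the smooth functions, together with a Lie bracket, a Riemannian metric `g`
and its Levi-Civita connection `nabla`. -/
structure SmoothVF (M : Type*) where
  VF : Type*
  [instAddCommGroup : AddCommGroup VF]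
  [instModule : Module (M → ℝ) VF]
  /-- the derivation action of a vector field on functions -/
  act : VF → (M → ℝ) → (M → ℝ)
  /-- the Lie bracket of vector fields -/
  bracket : VF → VF → VF
  /-- the Riemannian metric -/
  g : VF → VF → (M → ℝ)
  /-- the Levi-Civita connection of `g` -/
  nabla : VF → VF → VF
  g_symm : ∀ X Y, g X Y = g Y X
  g_add_left : ∀ X Y Z, g (X + Y) Z = g X Z + g Y Z
  g_smul_left : ∀ (f : M → ℝ) (X Y), g (f • X) Y = f * g X Y
  g_pos : ∀ X (p : M), 0 ≤ g X X p
  g_nondeg : ∀ X, (∀ Y, g X Y = 0) → X = 0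
  torsion_free : ∀ X Y, nabla X Y - nabla Y X = bracket X Y
  compat : ∀ X Y Z, act X (g Y Z) = g (nabla X Y) Z + g Y (nabla X Z)
  nabla_add_left : ∀ X Y Z, nabla (X + Y) Z = nabla X Z + nabla Y Z
  nabla_smul_left : ∀ (f : M → ℝ) (X Y), nabla (f • X) Y = f • nabla X Y
  nabla_add_right : ∀ X Y Z, nabla X (Y + Z) = nabla X Y + nabla X Z
  nabla_smul_right : ∀ (f : M → ℝ) (X Y), nabla X (f • Y) = act X f • Y + f • nabla X Y

attribute [instance] SmoothVF.instAddCommGroup SmoothVF.instModule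

namespace SmoothVF

variable {M : Type*} (D : SmoothVF M)

/-- The Riemann curvature 4-tensor of a connection `nab` with respect to a metric `gg`. -/
def riemOf (gg : D.VF → D.VF → (M → ℝ)) (nab : D.VF → D.VF → D.VF)
    (a b c d : D.VF) : M → ℝ :=
  gg (nab a (nab b c) - nab b (nab a c) - nab (D.bracket a b) c) d

/-- The Riemann curvature 4-tensor of `g`. -/
def Rm (a b c d : D.VF) : M → ℝ := D.riemOf D.g D.nabla a b c d

/-- The symmetric 2-tensor `∇T♭ : (X,Y) ↦ g(∇_X T, Y)`. -/
def nablaFlat (T : D.VF) (X Y : D.VF) : M → ℝ := D.g (D.nabla X T) Y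

/-- The Lorentzian sibling metric `g_L = g − 2T♭⊗T♭`. -/
def gLor (T : D.VF) (X Y : D.VF) : M → ℝ := D.g X Y - 2 * (D.g T X * D.g T Y)

/-- The Kulkarni–Nomizu product of two (symmetric) function-valued 2-tensors. -/
def kn (h k : D.VF → D.VF → (M → ℝ)) (a b c d : D.VF) : M → ℝ :=
  h a c * k b d + h b d * k a c - h a d * k b c - h b c * k a d

end SmoothVF

namespace SmoothVF

variable {M : Type*} (D : SmoothVF M)

/-- `nab` is the Levi-Civita connection of the metric `gg`: it is torsion-free,
compatible with `gg`, and tensorial/Leibniz in its arguments. -/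
def IsLeviCivitaOf (gg : D.VF → D.VF → (M → ℝ)) (nab : D.VF → D.VF → D.VF) : Prop :=
  (∀ X Y, nab X Y - nab Y X = D.bracket X Y) ∧
  (∀ X Y Z, D.act X (gg Y Z) = gg (nab X Y) Z + gg Y (nab X Z)) ∧
  (∀ X Y Z, nab (X + Y) Z = nab X Z + nab Y Z) ∧
  (∀ (f : M → ℝ) (X Y), nab (f • X) Y = f • nab X Y) ∧
  (∀ X Y Z, nab X (Y + Z) = nab X Y + nab X Z) ∧
  (∀ (f : M → ℝ) (X Y), nab X (f • Y) = D.act X f • Y + f • nab X Y)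

/-- Integrability of the orthogonal distribution `T^⊥`. -/
def PerpIntegrable (T : D.VF) : Prop :=
  ∀ X Y, D.g T X = 0 → D.g T Y = 0 → D.g T (D.bracket X Y) = 0

end SmoothVF

namespace SmoothVF

variable {M : Type*} (D : SmoothVF M)

lemma g_zero_left' (Z : D.VF) : D.g 0 Z = 0 := by
  have h := D.g_smul_left 0 0 Z
  simpa using h

lemma g_neg_left' (A Z : D.VF) : D.g (-A) Z = - D.g A Z := by
  have h := D.g_smul_left (-1) A Z
  simpa using h

lemma g_sub_left' (A B Z : D.VF) : D.g (A - B) Z = D.g A Z - D.g B Z := by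
  rw [sub_eq_add_neg, D.g_add_left, D.g_neg_left', ← sub_eq_add_neg]

lemma nabla_zero_right' (X : D.VF) : D.nabla X 0 = 0 := by
  have h := D.nabla_smul_right 0 X 0
  simpa using h

lemma act_zero' (X : D.VF) : D.act X 0 = 0 := by
  have h := D.compat X 0 0
  rw [D.g_zero_left', D.nabla_zero_right', D.g_zero_left'] at h
  simpa using h

lemma koszul (gg : D.VF → D.VF → (M → ℝ)) (nab : D.VF → D.VF → D.VF)
    (hsymm : ∀ A B, gg A B = gg B A)
    (hadd : ∀ A B C, gg (A + B) C = gg A C + gg B C)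
    (hLC : D.IsLeviCivitaOf gg nab) (X Y Z : D.VF) :
    2 * gg (nab X Y) Z =
      D.act X (gg Y Z) + D.act Y (gg Z X) - D.act Z (gg X Y)
      + gg (D.bracket X Y) Z - gg (D.bracket Y Z) X + gg (D.bracket Z X) Y := by
  obtain ⟨htor, hcompat, -, -, -, -⟩ := hLC
  have hzero : ∀ C, gg 0 C = 0 := by
    intro C
    have h := hadd 0 0 C
    rw [add_zero] at h
    have h2 : gg 0 C + 0 = gg 0 C + gg 0 C := by rw [add_zero]; exact h
    exact (add_left_cancel h2).symm
  have hneg : ∀ A C, gg (-A) C = - gg A C := by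
    intro A C
    have h := hadd A (-A) C
    rw [add_neg_cancel, hzero] at h
    exact eq_neg_of_add_eq_zero_right h.symm
  have hsub : ∀ A B C, gg (A - B) C = gg A C - gg B C := by
    intro A B C
    rw [sub_eq_add_neg, hadd, hneg, ← sub_eq_add_neg]
  rw [hcompat X Y Z, hcompat Y Z X, hcompat Z X Y,
      ← htor X Y, ← htor Y Z, ← htor Z X, hsub, hsub, hsub,
      hsymm Y (nab X Z), hsymm Z (nab Y X), hsymm X (nab Z Y)]
  ring

lemma gLor_symm (T A B : D.VF) : D.gLor T A B = D.gLor T B A := by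
  unfold gLor
  rw [D.g_symm A B]
  ring

lemma gLor_add_left (T A B C : D.VF) :
    D.gLor T (A + B) C = D.gLor T A C + D.gLor T B C := by
  unfold gLor
  rw [D.g_add_left A B C, D.g_symm T (A + B), D.g_add_left, D.g_symm A T, D.g_symm B T]
  ring

lemma gLor_sub_left (T A B C : D.VF) :
    D.gLor T (A - B) C = D.gLor T A C - D.gLor T B C := by
  unfold gLor
  rw [D.g_sub_left' A B C, D.g_symm T (A - B), D.g_sub_left', D.g_symm A T, D.g_symm B T]
  ring

lemma gLor_nondeg (T : D.VF) (hT : D.g T T = 1) (V : D.VF)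
    (h : ∀ Z, D.gLor T V Z = 0) : V = 0 := by
  have key : ∀ Z, D.g (V - (2 * D.g T V) • T) Z = 0 := by
    intro Z
    have h' := h Z
    unfold gLor at h'
    rw [sub_eq_zero] at h'
    rw [D.g_sub_left', D.g_smul_left, h']
    ring
  have hV : V - (2 * D.g T V) • T = 0 := D.g_nondeg _ key
  rw [sub_eq_zero] at hV
  have h3 : D.g T V = 2 * D.g T V := by
    conv_lhs => rw [hV]
    rw [D.g_symm T ((2 * D.g T V) • T), D.g_smul_left, hT, mul_one]
  have hTV : D.g T V = 0 := by
    funext p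
    have h4 := congrFun h3 p
    simp only [Pi.mul_apply, Pi.ofNat_apply, Pi.zero_apply] at h4 ⊢
    push_cast at h4
    linarith
  rw [hTV] at hV
  simpa using hV

end SmoothVF

open SmoothVF

/-- If `X, Y` are `g`-orthonormal local eigenvector fields of the shape operator `∇·T`,
orthogonal to `T`, with `∇_X T = μX` and `∇_Y T = νY`, then for the Levi-Civita
connection of `g_L = g − 2T♭⊗T♭` one has `∇^L_X Y = 2μ g(X,Y) T + ∇_X Y`. -/
theorem stmt11 {M : Type*} (D : SmoothVF M) (T : D.VF) (hT : D.g T T = 1)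
    (hgeo : D.nabla T T = 0) (hint : D.PerpIntegrable T)
    (nablaL : D.VF → D.VF → D.VF) (hLC : D.IsLeviCivitaOf (D.gLor T) nablaL)
    (X Y : D.VF) (mu nu : M → ℝ)
    (hX : D.nabla X T = mu • X) (hY : D.nabla Y T = nu • Y)
    (hTX : D.g T X = 0) (hTY : D.g T Y = 0)
    (hXX : D.g X X = 1) (hYY : D.g Y Y = 1) (hXY : X = Y ∨ D.g X Y = 0) :
    nablaL X Y = ((2 : M → ℝ) * mu * D.g X Y) • T + D.nabla X Y := by
  set W : D.VF := ((2 : M → ℝ) * mu * D.g X Y) • T + D.nabla X Y with hW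
  have hTnab : D.g T (D.nabla X Y) = -(mu * D.g X Y) := by
    have hc := D.compat X T Y
    rw [hTY, D.act_zero', hX, D.g_smul_left] at hc
    exact eq_neg_of_add_eq_zero_right hc.symm
  have hTW : D.g T W = mu * D.g X Y := by
    rw [hW, D.g_symm, D.g_add_left, D.g_smul_left, hT,
        D.g_symm (D.nabla X Y) T, hTnab]
    ring
  have hWZ : ∀ Z, D.gLor T W Z = D.g (D.nabla X Y) Z := by
    intro Z
    unfold SmoothVF.gLor
    rw [hTW, hW, D.g_add_left, D.g_smul_left]
    ring
  have hVZ : ∀ Z, D.gLor T (nablaL X Y) Z = D.g (D.nabla X Y) Z := by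
    intro Z
    have hkL := D.koszul (D.gLor T) nablaL (D.gLor_symm T) (D.gLor_add_left T) hLC X Y Z
    have hkg := D.koszul D.g D.nabla D.g_symm D.g_add_left
      ⟨D.torsion_free, D.compat, D.nabla_add_left, D.nabla_smul_left,
       D.nabla_add_right, D.nabla_smul_right⟩ X Y Z
    have e1 : D.gLor T Y Z = D.g Y Z := by unfold SmoothVF.gLor; rw [hTY]; ring
    have e2 : D.gLor T Z X = D.g Z X := by unfold SmoothVF.gLor; rw [hTX]; ring
    have e3 : D.gLor T X Y = D.g X Y := by unfold SmoothVF.gLor; rw [hTX]; ring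
    have e4 : D.gLor T (D.bracket X Y) Z = D.g (D.bracket X Y) Z := by
      unfold SmoothVF.gLor; rw [hint X Y hTX hTY]; ring
    have e5 : D.gLor T (D.bracket Y Z) X = D.g (D.bracket Y Z) X := by
      unfold SmoothVF.gLor; rw [hTX]; ring
    have e6 : D.gLor T (D.bracket Z X) Y = D.g (D.bracket Z X) Y := by
      unfold SmoothVF.gLor; rw [hTY]; ring
    rw [e1, e2, e3, e4, e5, e6, ← hkg] at hkL
    funext p
    have h4 := congrFun hkL p
    simp only [Pi.mul_apply, Pi.ofNat_apply] at h4
    push_cast at h4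
    linarith
  have hdiff : nablaL X Y - W = 0 := by
    apply D.gLor_nondeg T hT
    intro Z
    rw [D.gLor_sub_left, hVZ Z, hWZ Z, sub_self]
  have := sub_eq_zero.mp hdiff
  rw [this, hW]
end
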